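/- arXiv:1505.05437 — 4 statements merged into one kernel-verified Lean document; each statement's English description precedes it below -/
import Mathlib

section
/- Let p be a polynomial in d complex variables with no zeros in the open unit polydisk 𝔻^d, such that |p(z)| = 1 for every z in the d-torus 𝕋^d. Then p(z) = c·z^m for some multi-index m = (m_1,...,m_d) of nonnegative integers and a constant c of modulus 1. -/
/-!
On the torus `conj z_i = z_i⁻¹`, so for `M` dominating the exponents of `p` the reflected
polynomial `p̃(z) = z ^ M · conj (p (1 / conj z))` satisfies `p · p̃ = z ^ M · |p|² = z ^ M` there.
The torus is a product of infinite sets, hence `p · p̃ = X ^ M` as polynomials, and a divisor of a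
monomial is a monomial; evaluating at `z = 1` shows that its coefficient is unimodular.
-/

open MvPolynomial

theorem Complex.sphere_infinite (x : ℂ) {r : ℝ} (hr : 0 < r) : (Metric.sphere x r).Infinite := by
  refine (isPreconnected_sphere (by simp [Complex.rank_real_complex]) x r).infinite_of_nontrivial
    ⟨x + r, by simp [abs_of_pos hr], x - r, by simp [abs_of_pos hr], fun h ↦ ?_⟩
  have := congrArg Complex.re h
  simp only [Complex.add_re, Complex.ofReal_re, Complex.sub_re] at this
  linarith

namespace MvPolynomial

variable {σ : Type*}

theorem eq_of_eval_eq_on_torus {p q : MvPolynomial σ ℂ}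
    (h : ∀ z : σ → ℂ, (∀ i, ‖z i‖ = 1) → eval z p = eval z q) : p = q :=
  funext_set (fun _ ↦ Metric.sphere 0 1) (fun _ ↦ Complex.sphere_infinite 0 one_pos)
    fun z hz ↦ h z fun i ↦ by simpa using hz i trivial

theorem norm_eval_monomial_one_of_torus {z : σ → ℂ} (hz : ∀ i, ‖z i‖ = 1) (k : σ →₀ ℕ) :
    ‖eval z (monomial k 1)‖ = 1 := by
  simp [eval_monomial, Finsupp.prod, hz]

/-- The reflection `z ^ M * conj (p (1 / conj z))` of `p`, provided every exponent of `p` is `≤ M`;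
otherwise the truncated subtraction `M - k` makes it junk. -/
noncomputable def conjReflect (M : σ →₀ ℕ) (p : MvPolynomial σ ℂ) : MvPolynomial σ ℂ :=
  ∑ k ∈ p.support, monomial (M - k) (star (coeff k p))

theorem eval_conjReflect_of_torus {z : σ → ℂ} (hz : ∀ i, ‖z i‖ = 1) {M : σ →₀ ℕ}
    {p : MvPolynomial σ ℂ} (hM : ∀ k ∈ p.support, k ≤ M) :
    eval z (conjReflect M p) = eval z (monomial M 1) * star (eval z p) := by
  conv_rhs => rw [p.as_sum]
  rw [conjReflect, map_sum, map_sum, star_sum, Finset.mul_sum]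
  refine Finset.sum_congr rfl fun k hk ↦ ?_
  have hsplit : eval z (monomial M 1) = eval z (monomial (M - k) 1) * eval z (monomial k 1) := by
    rw [← map_mul, monomial_mul, tsub_add_cancel_of_le (hM k hk), one_mul]
  have hunit : eval z (monomial k 1) * star (eval z (monomial k 1)) = 1 := by
    rw [RCLike.star_def, RCLike.mul_conj, norm_eval_monomial_one_of_torus hz]
    norm_num
  have hscale (n : σ →₀ ℕ) (c : ℂ) : eval z (monomial n c) = c * eval z (monomial n 1) := by
    simp [eval_monomial]
  rw [hscale, hscale k, star_mul, hsplit]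
  linear_combination -star (coeff k p) * eval z (monomial (M - k) 1) * hunit

theorem mul_conjReflect_eq_monomial {M : σ →₀ ℕ} {p : MvPolynomial σ ℂ}
    (hM : ∀ k ∈ p.support, k ≤ M) (hp : ∀ z : σ → ℂ, (∀ i, ‖z i‖ = 1) → ‖eval z p‖ = 1) :
    p * conjReflect M p = monomial M 1 := by
  refine eq_of_eval_eq_on_torus fun z hz ↦ ?_
  rw [map_mul, eval_conjReflect_of_torus hz hM, mul_left_comm, RCLike.star_def, RCLike.mul_conj,
    hp z hz]
  norm_num

end MvPolynomial

theorem polydisk_stable_unimodular_is_monomial_general (d : ℕ) (p : MvPolynomial (Fin d) ℂ)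
    (hmod : ∀ z : Fin d → ℂ, (∀ i, ‖z i‖ = 1) → ‖eval z p‖ = 1) :
    ∃ (m : Fin d → ℕ) (c : ℂ), ‖c‖ = 1 ∧ p = C c * ∏ i, X i ^ m i := by
  have hdvd : p ∣ monomial (p.support.sup id) 1 :=
    ⟨_, (mul_conjReflect_eq_monomial (fun k hk ↦ Finset.le_sup (f := id) hk) hmod).symm⟩
  obtain ⟨m, c, -, -, rfl⟩ := dvd_monomial_one_iff_exists.mp hdvd
  refine ⟨m, c, by simpa [eval_monomial] using hmod 1 (by simp), ?_⟩
  rw [monomial_eq, Finsupp.prod_fintype _ _ fun _ ↦ pow_zero _]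

/-- A polynomial in `d` variables with no zeros in the open unit polydisk and unimodular
values on the `d`-torus is a unimodular constant times a monomial. -/
theorem polydisk_stable_unimodular_is_monomial (d : ℕ) (p : MvPolynomial (Fin d) ℂ)
    (hstable : ∀ z : Fin d → ℂ, (∀ i, ‖z i‖ < 1) → eval z p ≠ 0)
    (hmod : ∀ z : Fin d → ℂ, (∀ i, ‖z i‖ = 1) → ‖eval z p‖ = 1) :
    ∃ (m : Fin d → ℕ) (c : ℂ), ‖c‖ = 1 ∧ p = C c * ∏ i, X i ^ m i :=
  polydisk_stable_unimodular_is_monomial_general d p hmod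
end

section
/- Let p be a polynomial in the entries of a k-tuple of square matrix variables Z = (Z^{(1)},...,Z^{(k)}), with Z^{(r)} of size ℓ_r × ℓ_r, having no zeros on the polyball 𝓑 = {Z : ‖Z^{(r)}‖ < 1 for all r}, and suppose |p(Z)| = 1 whenever every Z^{(r)} is unitary. Then p(Z) = c·∏_{r=1}^k (det Z^{(r)})^{m_r} for some nonnegative integers m_r and constant c with |c| = 1. -/
/-!
Fix a tuple `U` of unitary matrices. Along the complex line `z ↦ z • U` the polynomial `p` becomes
an entire function with no zeros in the open unit disc and of modulus one on the unit circle; the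
maximum modulus principle, applied to it and to its reciprocal, makes it constant, so
`p(U) = p(0)`. Tuples of unitaries form a uniqueness set for polynomials: every invertible
matrix is `V * diagonal d * W` with `V, W` unitary, the entries depend polynomially on `d`, and
the torus `|dᵢ| = 1` is a uniqueness set; so a polynomial vanishing on unitary tuples vanishes
on invertible ones, hence everywhere. Thus `p` is the constant `p(0)`, of modulus one.
-/

open MvPolynomial

/-- Operator norm of a complex matrix (norm of the induced operator on Euclidean space). -/
noncomputable def opNorm {ι : Type*} [Fintype ι] [DecidableEq ι] (M : Matrix ι ι ℂ) : ℝ :=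
  ‖Matrix.toEuclideanCLM (𝕜 := ℂ) M‖

namespace Matrix

variable {n : Type*} [Fintype n] [DecidableEq n]

theorem diagonal_mem_unitaryGroup {d : n → ℂ} (hd : ∀ i, ‖d i‖ = 1) :
    diagonal d ∈ unitaryGroup n ℂ := by
  rw [mem_unitaryGroup_iff', star_eq_conjTranspose, diagonal_conjTranspose,
    diagonal_mul_diagonal, ← diagonal_one]
  congr 1
  funext i
  simp [RCLike.star_def, Complex.conj_mul', hd i]

theorem smul_mem_unitaryGroup {U : Matrix n n ℂ} (hU : U ∈ unitaryGroup n ℂ) {z : ℂ}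
    (hz : ‖z‖ = 1) : z • U ∈ unitaryGroup n ℂ := by
  rw [smul_eq_diagonal_mul]
  exact mul_mem (diagonal_mem_unitaryGroup fun _ => by simp [hz]) hU

theorem opNorm_le_one_of_mem_unitaryGroup {U : Matrix n n ℂ} (hU : U ∈ unitaryGroup n ℂ) :
    opNorm U ≤ 1 :=
  ContinuousLinearMap.opNorm_le_bound _ zero_le_one fun x => by
    rw [one_mul, ContinuousLinearMap.norm_map_of_mem_unitary (Unitary.map_mem toEuclideanCLM hU)]

theorem opNorm_smul (z : ℂ) (M : Matrix n n ℂ) : opNorm (z • M) = ‖z‖ * opNorm M := by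
  rw [opNorm, map_smul, norm_smul, opNorm]

open scoped MatrixOrder ComplexOrder in
theorem exists_mem_unitaryGroup_mul_isHermitian {Z : Matrix n n ℂ} (hZ : IsUnit Z.det) :
    ∃ V ∈ unitaryGroup n ℂ, ∃ P : Matrix n n ℂ, P.IsHermitian ∧ Z = V * P := by
  set P := CFC.sqrt (Zᴴ * Z)
  have hP : P.IsHermitian := (nonneg_iff_posSemidef.mp (CFC.sqrt_nonneg _)).1
  have hPP : P * P = Zᴴ * Z := CFC.sqrt_mul_sqrt_self _ (nonneg_iff_posSemidef.mpr
    (posSemidef_conjTranspose_mul_self Z))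
  have hPdet : IsUnit P.det := by
    refine isUnit_of_mul_isUnit_left (y := P.det) ?_
    rw [← det_mul, hPP, det_mul, det_conjTranspose]
    exact (isUnit_star.mpr hZ).mul hZ
  refine ⟨Z * P⁻¹, ?_, P, hP, (nonsing_inv_mul_cancel_right _ _ hPdet).symm⟩
  rw [mem_unitaryGroup_iff', star_eq_conjTranspose, conjTranspose_mul,
    conjTranspose_nonsing_inv, hP.eq]
  calc P⁻¹ * Zᴴ * (Z * P⁻¹) = P⁻¹ * (P * P) * P⁻¹ := by simp only [hPP, Matrix.mul_assoc]
    _ = 1 := by simp only [Matrix.mul_assoc, mul_nonsing_inv _ hPdet, Matrix.mul_one,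
      nonsing_inv_mul _ hPdet]

theorem exists_mem_unitaryGroup_mul_diagonal_mul {Z : Matrix n n ℂ} (hZ : IsUnit Z.det) :
    ∃ V ∈ unitaryGroup n ℂ, ∃ W ∈ unitaryGroup n ℂ, ∃ d : n → ℂ, Z = V * diagonal d * W := by
  obtain ⟨V, hV, P, hP, rfl⟩ := exists_mem_unitaryGroup_mul_isHermitian hZ
  have hU := hP.eigenvectorUnitary.2
  refine ⟨V * hP.eigenvectorUnitary, mul_mem hV hU, star hP.eigenvectorUnitary,
    Unitary.star_mem hU, RCLike.ofReal ∘ hP.eigenvalues, ?_⟩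
  conv_lhs => rw [hP.spectral_theorem, Unitary.conjStarAlgAut_apply]
  simp only [Matrix.mul_assoc]

end Matrix

namespace MvPolynomial

variable {σ : Type*}

theorem eq_zero_of_eval_eq_zero_of_norm_eq_one (q : MvPolynomial σ ℂ)
    (h : ∀ x : σ → ℂ, (∀ i, ‖x i‖ = 1) → eval x q = 0) : q = 0 := by
  have hsphere : (Metric.sphere (0 : ℂ) 1).Infinite :=
    (isPreconnected_sphere (by simp [Complex.rank_real_complex]) 0 1).infinite_of_nontrivial
      ⟨1, by simp, -1, by simp, by norm_num⟩
  refine funext_set (fun _ => Metric.sphere 0 1) (fun _ => hsphere) fun x hx => ?_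
  rw [h x fun i => by simpa using hx i trivial, map_zero]

theorem eq_zero_of_eval_eq_zero_of_eval_ne_zero {R : Type*} [CommRing R] [IsDomain R]
    [Infinite R] {q D : MvPolynomial σ R} (hD : D ≠ 0)
    (h : ∀ x, eval x D ≠ 0 → eval x q = 0) : q = 0 := by
  have hqD : q * D = 0 := funext fun x => by
    by_cases hx : eval x D = 0 <;> simp [hx, h x]
  exact (mul_eq_zero.mp hqD).resolve_right hD

theorem differentiable_eval_comp {𝕜 E : Type*} [NontriviallyNormedField 𝕜]
    [NormedAddCommGroup E] [NormedSpace 𝕜 E] {f : E → σ → 𝕜}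
    (hf : ∀ i, Differentiable 𝕜 fun x => f x i) (p : MvPolynomial σ 𝕜) :
    Differentiable 𝕜 fun x => eval (f x) p := by
  induction p using MvPolynomial.induction_on with
  | C a => simp
  | add p q hp hq => simp only [map_add]; exact hp.add hq
  | mul_X p i hp => simp only [map_mul, eval_X]; exact hp.mul (hf i)

end MvPolynomial

open Metric in
theorem Complex.eqOn_closedBall_of_ne_zero_of_norm_eq_one {f : ℂ → ℂ} (hf : Differentiable ℂ f)
    (hne : ∀ z ∈ ball 0 1, f z ≠ 0) (hmod : ∀ z ∈ sphere 0 1, ‖f z‖ = 1) :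
    Set.EqOn f (Function.const ℂ (f 0)) (closedBall 0 1) := by
  have bound : ∀ g : ℂ → ℂ, DifferentiableOn ℂ g (closedBall 0 1) →
      (∀ z ∈ sphere 0 1, ‖g z‖ ≤ 1) → ∀ z ∈ closedBall 0 1, ‖g z‖ ≤ 1 := by
    intro g hg hgs z hz
    refine Complex.norm_le_of_forall_mem_frontier_norm_le (U := ball 0 1) isBounded_ball ?_ ?_ ?_
    · rw [← closure_ball 0 one_ne_zero] at hg
      exact hg.diffContOnCl
    · rwa [frontier_ball 0 one_ne_zero]
    · rwa [closure_ball 0 one_ne_zero]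
  have hne' : ∀ z ∈ closedBall 0 1, f z ≠ 0 := by
    intro z hz h0
    rcases (mem_closedBall.mp hz).lt_or_eq with h | h
    · exact hne z (mem_ball.mpr h) h0
    · simpa [h0] using hmod z (mem_sphere.mpr h)
  have hle := bound f hf.differentiableOn fun z hz => (hmod z hz).le
  have hinv := bound (fun z => (f z)⁻¹) (hf.differentiableOn.inv hne') fun z hz => by
    simp [hmod z hz]
  refine Complex.eqOn_closedBall_of_isMaxOn_norm hf.diffContOnCl fun z hz => ?_
  have h0 := hinv 0 (mem_closedBall_self zero_le_one)
  rw [norm_inv, inv_le_one₀ (norm_pos_iff.mpr (hne' 0 (mem_closedBall_self zero_le_one)))] at h0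
  exact (hle z (ball_subset_closedBall hz)).trans h0

section Blocks

variable {ι : Type*} {n : ι → Type*}

def blockEntries {R : Type*} (Z : ∀ i, Matrix (n i) (n i) R) : (Σ i, n i × n i) → R :=
  fun v => Z v.1 v.2.1 v.2.2

variable [∀ i, Fintype (n i)] [∀ i, DecidableEq (n i)]

theorem eval_blockEntries_det_of_X {R : Type*} [CommRing R] (Z : ∀ i, Matrix (n i) (n i) R)
    (i : ι) :
    eval (blockEntries Z) (Matrix.of fun a b => (X ⟨i, (a, b)⟩ : MvPolynomial _ R)).det =
      (Z i).det := by
  rw [RingHom.map_det]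
  congr 1
  ext a b
  simp [blockEntries]

variable {q : MvPolynomial (Σ i, n i × n i) ℂ}

theorem eval_blockEntries_mul_diagonal_mul_eq_zero
    (hq : ∀ U : ∀ i, Matrix (n i) (n i) ℂ, (∀ i, U i ∈ Matrix.unitaryGroup (n i) ℂ) →
      eval (blockEntries U) q = 0)
    {V W : ∀ i, Matrix (n i) (n i) ℂ}
    (hV : ∀ i, V i ∈ Matrix.unitaryGroup (n i) ℂ) (hW : ∀ i, W i ∈ Matrix.unitaryGroup (n i) ℂ)
    (d : ∀ i, n i → ℂ) :
    eval (blockEntries fun i => V i * Matrix.diagonal (d i) * W i) q = 0 := by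
  let g : (Σ i, n i × n i) → MvPolynomial (Σ i, n i) ℂ :=
    fun v => ∑ m, C (V v.1 v.2.1 m * W v.1 m v.2.2) * X ⟨v.1, m⟩
  -- `g v` is the `v`-entry of `V * diagonal x * W`, as a linear form in the diagonal `x`
  have hg : ∀ x, eval x (bind₁ g q) =
      eval (blockEntries fun i => V i * Matrix.diagonal (fun m => x ⟨i, m⟩) * W i) q := by
    intro x
    rw [eval, eval₂Hom_bind₁]
    refine congrArg (fun y => eval y q) (funext fun v => ?_)
    rw [blockEntries, Matrix.mul_apply]
    simp [g, Matrix.mul_diagonal, mul_right_comm]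
  have hgq : bind₁ g q = 0 := eq_zero_of_eval_eq_zero_of_norm_eq_one _ fun x hx => by
    rw [hg]
    exact hq _ fun i => mul_mem (mul_mem (hV i) (Matrix.diagonal_mem_unitaryGroup
      fun m => hx ⟨i, m⟩)) (hW i)
  simpa [hgq] using (hg fun t => d t.1 t.2).symm

theorem eval_blockEntries_eq_zero_of_isUnit_det
    (hq : ∀ U : ∀ i, Matrix (n i) (n i) ℂ, (∀ i, U i ∈ Matrix.unitaryGroup (n i) ℂ) →
      eval (blockEntries U) q = 0)
    {Z : ∀ i, Matrix (n i) (n i) ℂ}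
    (hZ : ∀ i, IsUnit (Z i).det) : eval (blockEntries Z) q = 0 := by
  choose V hV W hW d hZ using fun i => Matrix.exists_mem_unitaryGroup_mul_diagonal_mul (hZ i)
  rw [funext hZ]
  exact eval_blockEntries_mul_diagonal_mul_eq_zero hq hV hW d

theorem eq_zero_of_eval_blockEntries_unitary_eq_zero [Fintype ι]
    (hq : ∀ U : ∀ i, Matrix (n i) (n i) ℂ, (∀ i, U i ∈ Matrix.unitaryGroup (n i) ℂ) →
      eval (blockEntries U) q = 0) :
    q = 0 := by
  set D : MvPolynomial (Σ i, n i × n i) ℂ :=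
    ∏ i, (Matrix.of fun a b => (X ⟨i, (a, b)⟩ : MvPolynomial _ ℂ)).det
  have hD : ∀ Z, eval (blockEntries Z) D = ∏ i, (Z i).det := fun Z => by
    simp only [D, map_prod, eval_blockEntries_det_of_X]
  refine eq_zero_of_eval_eq_zero_of_eval_ne_zero (D := D) ?_ fun x hx => ?_
  · intro h0
    have h1 := hD 1
    simp only [h0, map_zero, Pi.one_apply, Matrix.det_one, Finset.prod_const_one] at h1
    exact zero_ne_one h1
  · let Z : ∀ i, Matrix (n i) (n i) ℂ := fun i a b => x ⟨i, (a, b)⟩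
    have hxZ : x = blockEntries Z := rfl
    rw [hxZ, hD, Finset.prod_ne_zero_iff] at hx
    rw [hxZ]
    exact eval_blockEntries_eq_zero_of_isUnit_det hq fun i => (hx i (Finset.mem_univ i)).isUnit

theorem eval_blockEntries_unitary_eq_eval_zero {p : MvPolynomial (Σ i, n i × n i) ℂ}
    (hstable : ∀ Z : ∀ i, Matrix (n i) (n i) ℂ, (∀ i, opNorm (Z i) < 1) →
      eval (blockEntries Z) p ≠ 0)
    (hmod : ∀ Z : ∀ i, Matrix (n i) (n i) ℂ, (∀ i, Z i ∈ Matrix.unitaryGroup (n i) ℂ) →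
      ‖eval (blockEntries Z) p‖ = 1)
    (U : ∀ i, Matrix (n i) (n i) ℂ) (hU : ∀ i, U i ∈ Matrix.unitaryGroup (n i) ℂ) :
    eval (blockEntries U) p = eval 0 p := by
  let f : ℂ → ℂ := fun z => eval (blockEntries (z • U)) p
  have hf : Differentiable ℂ f :=
    differentiable_eval_comp (fun v => differentiable_id.mul_const _) p
  have hball : ∀ z ∈ Metric.ball 0 1, f z ≠ 0 := fun z hz => hstable _ fun i => by
    rw [Pi.smul_apply, Matrix.opNorm_smul]
    exact mul_lt_one_of_nonneg_of_lt_one_left (norm_nonneg z) (mem_ball_zero_iff.mp hz)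
      (Matrix.opNorm_le_one_of_mem_unitaryGroup (hU i))
  have hsphere : ∀ z ∈ Metric.sphere 0 1, ‖f z‖ = 1 := fun z hz =>
    hmod _ fun i => Matrix.smul_mem_unitaryGroup (hU i) (mem_sphere_zero_iff_norm.mp hz)
  have h1 : f 1 = f 0 := Complex.eqOn_closedBall_of_ne_zero_of_norm_eq_one hf hball hsphere
    (by simp : (1 : ℂ) ∈ Metric.closedBall 0 1)
  simp only [f, one_smul, zero_smul] at h1
  exact h1

end Blocks

/-- A polynomial in the entries of a `k`-tuple of square matrix variables with no zeros
on the unit square-matrix polyball and unimodular values at all tuples of unitary matrices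
is a unimodular constant times a product of powers of the block determinants. -/
theorem polyball_stable_unimodular_is_product_of_det_powers (k : ℕ) (ℓ : Fin k → ℕ)
    (p : MvPolynomial (Σ r : Fin k, Fin (ℓ r) × Fin (ℓ r)) ℂ)
    (hstable : ∀ Z : ∀ r : Fin k, Matrix (Fin (ℓ r)) (Fin (ℓ r)) ℂ,
      (∀ r, opNorm (Z r) < 1) → eval (fun v => Z v.1 v.2.1 v.2.2) p ≠ 0)
    (hmod : ∀ Z : ∀ r : Fin k, Matrix (Fin (ℓ r)) (Fin (ℓ r)) ℂ,
      (∀ r, Z r ∈ Matrix.unitaryGroup (Fin (ℓ r)) ℂ) →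
      ‖eval (fun v => Z v.1 v.2.1 v.2.2) p‖ = 1) :
    ∃ (m : Fin k → ℕ) (c : ℂ), ‖c‖ = 1 ∧
      p = C c * ∏ r, (Matrix.det (Matrix.of fun i j : Fin (ℓ r) =>
        (X ⟨r, (i, j)⟩ : MvPolynomial (Σ r : Fin k, Fin (ℓ r) × Fin (ℓ r)) ℂ))) ^ m r := by
  have hunitary :=
    eval_blockEntries_unitary_eq_eval_zero (n := fun r => Fin (ℓ r)) hstable hmod
  have hconst : p = C (eval 0 p) := sub_eq_zero.mp <|
    eq_zero_of_eval_blockEntries_unitary_eq_zero fun U hU => by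
      rw [map_sub, eval_C, hunitary U hU, sub_self]
  refine ⟨0, eval 0 p, ?_, by simpa using hconst⟩
  rw [← hunitary 1 fun _ => one_mem _]
  exact hmod 1 fun _ => one_mem _
end

section
/- Every completely positive linear map Φ : ℂ^{a×a} → ℂ^{b×b} admits a representation Φ(X) = Y*(X ⊗ I_{ab})Y for some matrix Y ∈ ℂ^{a²b × b}. -/
/-!
Apply `Φ` blockwise to the positive semidefinite rank-one matrix `v v*`, where `v = ∑ᵢ eᵢ ⊗ eᵢ`
is the vectorised identity: the result is the Choi matrix `C = (Φ(Eᵢⱼ))ᵢⱼ`, so `C = M* M` for some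
`M`. A linear map on matrices is determined by its Choi matrix, and the Choi matrix of
`X ↦ Y* (X ⊗ I) Y` is `N* N` where `N` is `Y` with its indices reshuffled. Taking for `Y` the
reshuffling of `M` therefore gives `Φ`.
-/

open Kronecker Matrix ComplexOrder

namespace Matrix

variable {R n k r : Type*}

def choiMatrix [Semiring R] [DecidableEq n] (Φ : Matrix n n R →ₗ[R] Matrix k k R) :
    Matrix (n × k) (n × k) R :=
  of fun p q => Φ (single p.1 q.1 1) p.2 q.2

def ampliation {m : Type*} [Semiring R] (Φ : Matrix n n R →ₗ[R] Matrix k k R)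
    (A : Matrix (m × n) (m × n) R) : Matrix (m × k) (m × k) R :=
  of fun p q => Φ (of fun i j => A (p.1, i) (q.1, j)) p.2 q.2

theorem ampliation_vecMulVec_one_eq_choiMatrix [Semiring R] [StarRing R] [DecidableEq n]
    (Φ : Matrix n n R →ₗ[R] Matrix k k R) :
    ampliation Φ (vecMulVec (fun p : n × n => (1 : Matrix n n R) p.1 p.2)
      (star fun p : n × n => (1 : Matrix n n R) p.1 p.2)) = choiMatrix Φ := by
  have hblock (i j : n) : (of fun k l => (1 : Matrix n n R) i k * star ((1 : Matrix n n R) j l))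
      = single i j 1 := by
    ext k l
    by_cases hik : i = k <;> by_cases hjl : j = l <;> simp [one_apply, hik, hjl]
  ext p q
  simp only [ampliation, choiMatrix, vecMulVec_apply, Pi.star_apply, hblock, of_apply]

theorem choiMatrix_injective [Semiring R] [Finite n] [DecidableEq n] :
    Function.Injective (choiMatrix : (Matrix n n R →ₗ[R] Matrix k k R) → _) :=
  fun _ _ h => ext_linearMap R fun i j => LinearMap.ext_ring <| by
    ext p q
    exact congrFun (congrFun h (i, p)) (j, q)

variable [Fintype r] [DecidableEq r]

def stinespringMap [CommRing R] [StarRing R] [Fintype n] (Y : Matrix (n × r) k R) :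
    Matrix n n R →ₗ[R] Matrix k k R where
  toFun X := Yᴴ * (X ⊗ₖ (1 : Matrix r r R)) * Y
  map_add' X X' := by rw [add_kronecker, Matrix.mul_add, Matrix.add_mul]
  map_smul' c X := by rw [smul_kronecker, Matrix.mul_smul, Matrix.smul_mul]; rfl

theorem stinespringMap_apply [CommRing R] [StarRing R] [Fintype n] (Y : Matrix (n × r) k R)
    (X : Matrix n n R) : stinespringMap Y X = Yᴴ * (X ⊗ₖ (1 : Matrix r r R)) * Y := rfl

theorem choiMatrix_stinespringMap [CommRing R] [StarRing R] [Fintype n] [DecidableEq n]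
    (Y : Matrix (n × r) k R) :
    choiMatrix (stinespringMap Y) =
      (of fun s p => Y (p.1, s) p.2)ᴴ * of fun (s : r) (p : n × k) => Y (p.1, s) p.2 := by
  ext ⟨i, p⟩ ⟨j, q⟩
  simp [choiMatrix, stinespringMap_apply, mul_apply, single_apply, one_apply,
    Fintype.sum_prod_type, ite_and]

theorem eq_stinespringMap_of_choiMatrix_eq [CommRing R] [StarRing R] [Fintype n] [DecidableEq n]
    {Φ : Matrix n n R →ₗ[R] Matrix k k R} (M : Matrix r (n × k) R)
    (hΦ : choiMatrix Φ = Mᴴ * M) :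
    Φ = stinespringMap (of fun u q => M u.2 (u.1, q)) :=
  choiMatrix_injective <| by rw [hΦ, choiMatrix_stinespringMap]; rfl

theorem exists_eq_stinespringMap_of_posSemidef_choiMatrix {𝕜 : Type*} [RCLike 𝕜] [Fintype n]
    [DecidableEq n] [Fintype k] [DecidableEq k] {Φ : Matrix n n 𝕜 →ₗ[𝕜] Matrix k k 𝕜}
    (hΦ : (choiMatrix Φ).PosSemidef) (e : r ≃ n × k) :
    ∃ Y : Matrix (n × r) k 𝕜, Φ = stinespringMap Y := by
  open scoped MatrixOrder in
  obtain ⟨M, hM⟩ := CStarAlgebra.nonneg_iff_eq_star_mul_self.mp hΦ.nonneg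
  refine ⟨_, eq_stinespringMap_of_choiMatrix_eq (M.submatrix e id) ?_⟩
  rw [conjTranspose_submatrix, submatrix_mul_equiv, submatrix_id_id, hM, star_eq_conjTranspose]

end Matrix

/-- Choi's theorem: every completely positive linear map `Φ : ℂ^{a×a} → ℂ^{b×b}` has the form
`Φ(X) = Y* (X ⊗ I_{ab}) Y` for some `Y ∈ ℂ^{a²b × b}`. -/
theorem choi_representation {a b : ℕ}
    (Φ : Matrix (Fin a) (Fin a) ℂ →ₗ[ℂ] Matrix (Fin b) (Fin b) ℂ)
    (hcp : ∀ (m : ℕ) (A : Matrix (Fin m × Fin a) (Fin m × Fin a) ℂ), A.PosSemidef →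
      (Matrix.of fun p q : Fin m × Fin b =>
        Φ (Matrix.of fun i j => A (p.1, i) (q.1, j)) p.2 q.2).PosSemidef) :
    ∃ Y : Matrix (Fin a × Fin (a * b)) (Fin b) ℂ,
      ∀ X : Matrix (Fin a) (Fin a) ℂ,
        Φ X = Yᴴ * (X ⊗ₖ (1 : Matrix (Fin (a * b)) (Fin (a * b)) ℂ)) * Y := by
  have hchoi : (choiMatrix Φ).PosSemidef := by
    rw [← ampliation_vecMulVec_one_eq_choiMatrix]
    exact hcp a _ (posSemidef_vecMulVec_self_star _)
  obtain ⟨Y, hY⟩ := exists_eq_stinespringMap_of_posSemidef_choiMatrix hchoi finProdFinEquiv.symm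
  exact ⟨Y, fun X => by rw [hY, stinespringMap_apply]⟩
end

section
/- Let f(z) = z^m p̌(z)/p(z) be a scalar rational inner function on 𝔻^d with p stable (no zeros in 𝔻^d) and coprime with p̌, and suppose f is the transfer function f(z) = D + C Z_n (I − A Z_n)^{-1} B of a unitary colligation [A B; C D], where Z_n = ⊕_{r=1}^d z_r I_{n_r}. Then p divides the polynomial z ↦ det(I − A Z_n) in ℂ[z_1,...,z_d]. -/
/-!
Since the colligation is unitary, `A` is a contraction, so `I - A Zₙ` is invertible on the open
polydisc. There Cramer's rule turns the realization into `z^m p̌ · det (I - A Zₙ) = p · N`, where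
`N = det (I - A Zₙ) D + C Zₙ adj (I - A Zₙ) B` is a polynomial; a polynomial identity on the
polydisc holds everywhere. Finally `p` is coprime with `p̌` and, as it does not vanish at the
origin, with every `zᵢ`, hence with `z^m p̌`, so it divides `det (I - A Zₙ)`.
-/

open MvPolynomial

namespace Matrix

variable {ι κ : Type*} [Fintype ι] [Fintype κ]

lemma star_dotProduct_self_eq_sum_normSq (v : ι → ℂ) :
    star v ⬝ᵥ v = ((∑ k, Complex.normSq (v k) : ℝ) : ℂ) := by
  simp only [dotProduct, Pi.star_apply, Complex.ofReal_sum, Complex.star_def,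
    Complex.normSq_eq_conj_mul_self]

variable [DecidableEq ι] [DecidableEq κ]

lemma sum_normSq_mulVec_le_of_fromBlocks_mem_unitaryGroup {A : Matrix ι ι ℂ}
    {B : Matrix ι κ ℂ} {C : Matrix κ ι ℂ} {D : Matrix κ κ ℂ}
    (hU : fromBlocks A B C D ∈ unitaryGroup (ι ⊕ κ) ℂ) (w : ι → ℂ) :
    ∑ k, Complex.normSq ((A *ᵥ w) k) ≤ ∑ k, Complex.normSq (w k) := by
  set u : ι ⊕ κ → ℂ := Sum.elim w 0
  have hnorm : star (fromBlocks A B C D *ᵥ u) ⬝ᵥ (fromBlocks A B C D *ᵥ u) = star u ⬝ᵥ u := by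
    rw [star_mulVec, ← dotProduct_mulVec, mulVec_mulVec, ← star_eq_conjTranspose, hU.1,
      one_mulVec]
  simp only [u, fromBlocks_mulVec, Sum.elim_comp_inl, Sum.elim_comp_inr, mulVec_zero, add_zero,
    star_dotProduct_self_eq_sum_normSq, Complex.ofReal_inj, Fintype.sum_sum_type, Sum.elim_inl,
    Sum.elim_inr, Pi.zero_apply, map_zero, Finset.sum_const_zero] at hnorm
  have : 0 ≤ ∑ k, Complex.normSq ((C *ᵥ w) k) :=
    Finset.sum_nonneg fun k _ => Complex.normSq_nonneg _
  linarith

lemma det_one_sub_mul_diagonal_ne_zero {A : Matrix ι ι ℂ}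
    (hA : ∀ w, ∑ k, Complex.normSq ((A *ᵥ w) k) ≤ ∑ k, Complex.normSq (w k))
    {g : ι → ℂ} (hg : ∀ k, ‖g k‖ < 1) : (1 - A * diagonal g).det ≠ 0 := by
  rw [Ne, ← exists_mulVec_eq_zero_iff]
  rintro ⟨v, hv0, hv⟩
  have hfix : A *ᵥ (g * v) = v := by
    rw [sub_mulVec, one_mulVec, sub_eq_zero, ← mulVec_mulVec] at hv
    conv_rhs => rw [hv]
    congr 1; ext k; exact (mulVec_diagonal g v k).symm
  obtain ⟨k₀, hk₀⟩ := Function.ne_iff.mp hv0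
  have hcontract (k) : Complex.normSq (g k * v k) ≤ Complex.normSq (v k) := by
    rw [Complex.normSq_mul]
    exact mul_le_of_le_one_left (Complex.normSq_nonneg _)
      (by rw [Complex.normSq_eq_norm_sq]; nlinarith [hg k, norm_nonneg (g k)])
  have hstrict : Complex.normSq (g k₀ * v k₀) < Complex.normSq (v k₀) := by
    rw [Complex.normSq_mul]
    exact mul_lt_of_lt_one_left (Complex.normSq_pos.2 hk₀)
      (by rw [Complex.normSq_eq_norm_sq]; nlinarith [hg k₀, norm_nonneg (g k₀)])
  have := hA (g * v)
  rw [hfix] at this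
  exact this.not_gt (Finset.sum_lt_sum (fun k _ => hcontract k) ⟨k₀, Finset.mem_univ _, hstrict⟩)

end Matrix

section TransferNumerator

variable {ι κ R S : Type*} [Fintype ι] [DecidableEq ι] [CommRing R] [CommRing S]

def Matrix.transferNumerator (A Z : Matrix ι ι R) (B : Matrix ι κ R) (C : Matrix κ ι R)
    (D : Matrix κ κ R) : Matrix κ κ R :=
  (1 - A * Z).det • D + C * Z * (1 - A * Z).adjugate * B

open Matrix

lemma Matrix.det_smul_transfer_eq_transferNumerator {A Z : Matrix ι ι R} (B : Matrix ι κ R)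
    (C : Matrix κ ι R) (D : Matrix κ κ R) (h : IsUnit (1 - A * Z).det) :
    (1 - A * Z).det • (D + C * Z * (1 - A * Z)⁻¹ * B) = transferNumerator A Z B C D := by
  rw [transferNumerator, inv_def, Matrix.mul_smul, Matrix.smul_mul, smul_add, smul_smul,
    Ring.mul_inverse_cancel _ h, one_smul]

lemma RingHom.map_transferNumerator (f : R →+* S) (A Z : Matrix ι ι R) (B : Matrix ι κ R)
    (C : Matrix κ ι R) (D : Matrix κ κ R) :
    (transferNumerator A Z B C D).map f =
      transferNumerator (A.map f) (Z.map f) (B.map f) (C.map f) (D.map f) := by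
  have hM : (1 - A * Z).map f = 1 - A.map f * Z.map f := by
    rw [← f.mapMatrix_apply, map_sub, map_one, map_mul]; rfl
  rw [transferNumerator, transferNumerator, Matrix.map_add _ (map_add f),
    Matrix.map_smulₛₗ _ f _ (map_mul f _), Matrix.map_mul, Matrix.map_mul, Matrix.map_mul,
    ← f.mapMatrix_apply (1 - A * Z).adjugate, f.map_adjugate, f.map_det, f.mapMatrix_apply, hM]

end TransferNumerator

section Evaluation

variable {ι κ σ R : Type*} [CommRing R]

open Matrix

lemma Matrix.map_eval_map_C (z : σ → R) (M : Matrix ι κ R) :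
    (M.map MvPolynomial.C).map (eval z) = M := by
  ext; simp

lemma Matrix.map_eval_diagonal_X [DecidableEq ι] (z : σ → R) (c : ι → σ) :
    (diagonal fun k => (X (c k) : MvPolynomial σ R)).map (eval z) = diagonal fun k => z (c k) := by
  simp [diagonal_map]

variable [Fintype ι] [DecidableEq ι]

lemma eval_det_one_sub_mul_diagonal_X (z : σ → R) (c : ι → σ) (A : Matrix ι ι R) :
    eval z (1 - A.map MvPolynomial.C * diagonal fun k => X (c k)).det =
      (1 - A * diagonal fun k => z (c k)).det := by
  rw [RingHom.map_det, map_sub, map_one, map_mul, RingHom.mapMatrix_apply,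
    RingHom.mapMatrix_apply, map_eval_map_C, map_eval_diagonal_X]

lemma eval_transferNumerator_X (z : σ → R) (c : ι → σ) (A : Matrix ι ι R) (B : Matrix ι κ R)
    (C : Matrix κ ι R) (D : Matrix κ κ R) :
    (transferNumerator (A.map MvPolynomial.C) (diagonal fun k => X (c k)) (B.map MvPolynomial.C)
      (C.map MvPolynomial.C) (D.map MvPolynomial.C)).map (eval z) =
      transferNumerator A (diagonal fun k => z (c k)) B C D := by
  rw [RingHom.map_transferNumerator]
  simp only [map_eval_map_C, map_eval_diagonal_X]

end Evaluation

lemma MvPolynomial.isRelPrime_X_of_eval_zero_ne_zero {σ R : Type*} [CommRing R] [IsDomain R]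
    {p : MvPolynomial σ R} (hp : eval 0 p ≠ 0) (i : σ) : IsRelPrime p (X i) := by
  rw [isRelPrime_comm, (X_prime (R := R)).irreducible.isRelPrime_iff_not_dvd]
  rintro ⟨q, rfl⟩
  simp at hp

theorem denominator_divides_det_of_realization_general (d : ℕ) (n : Fin d → ℕ)
    (p pr : MvPolynomial (Fin d) ℂ) (m : Fin d → ℕ)
    (hstable : ∀ z : Fin d → ℂ, (∀ i, ‖z i‖ < 1) → eval z p ≠ 0)
    (hcoprime : ∀ r : MvPolynomial (Fin d) ℂ, r ∣ p → r ∣ pr → IsUnit r)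
    (A : Matrix (Σ r : Fin d, Fin (n r)) (Σ r : Fin d, Fin (n r)) ℂ)
    (B : Matrix (Σ r : Fin d, Fin (n r)) (Fin 1) ℂ)
    (C : Matrix (Fin 1) (Σ r : Fin d, Fin (n r)) ℂ)
    (D : Matrix (Fin 1) (Fin 1) ℂ)
    (hU : Matrix.fromBlocks A B C D ∈ Matrix.unitaryGroup ((Σ r : Fin d, Fin (n r)) ⊕ Fin 1) ℂ)
    (htransfer : ∀ z : Fin d → ℂ, (∀ i, ‖z i‖ < 1) →
      eval z ((∏ i, X i ^ m i) * pr) =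
        eval z p *
          ((D + C * Matrix.blockDiagonal' (fun r => z r • (1 : Matrix (Fin (n r)) (Fin (n r)) ℂ)) *
              (1 - A * Matrix.blockDiagonal'
                (fun r => z r • (1 : Matrix (Fin (n r)) (Fin (n r)) ℂ)))⁻¹ * B) 0 0)) :
    p ∣ Matrix.det (1 - A.map MvPolynomial.C * Matrix.blockDiagonal'
      (fun r => (X r : MvPolynomial (Fin d) ℂ) • (1 : Matrix (Fin (n r)) (Fin (n r)) _))) := by
  simp only [Matrix.smul_one_eq_diagonal, Matrix.blockDiagonal'_diagonal] at htransfer ⊢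
  set N := Matrix.transferNumerator (A.map MvPolynomial.C)
    (Matrix.diagonal fun k : Σ r : Fin d, Fin (n r) => (X k.1 : MvPolynomial (Fin d) ℂ))
    (B.map MvPolynomial.C) (C.map MvPolynomial.C) (D.map MvPolynomial.C)
  have hid : (∏ i, X i ^ m i) * pr *
      (1 - A.map MvPolynomial.C * Matrix.diagonal fun k : Σ r : Fin d, Fin (n r) => X k.1).det =
        p * N 0 0 := by
    refine funext_set (fun _ => Metric.ball 0 1)
      (fun _ => infinite_of_mem_nhds 0 (Metric.ball_mem_nhds 0 one_pos)) fun z hzball => ?_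
    have hz : ∀ i, ‖z i‖ < 1 := by simpa using hzball
    have hdet := Matrix.det_one_sub_mul_diagonal_ne_zero
      (Matrix.sum_normSq_mulVec_le_of_fromBlocks_mem_unitaryGroup hU) fun k => hz k.1
    rw [eval_mul, htransfer z hz, eval_mul, eval_det_one_sub_mul_diagonal_X,
      show eval z (N 0 0) = N.map (eval z) 0 0 from rfl, eval_transferNumerator_X,
        ← Matrix.det_smul_transfer_eq_transferNumerator B C D (isUnit_iff_ne_zero.2 hdet),
      Matrix.smul_apply, smul_eq_mul]
    ring
  have hp0 : eval 0 p ≠ 0 := hstable 0 fun _ => by simp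
  have hrel : IsRelPrime p ((∏ i, X i ^ m i) * pr) :=
    (IsRelPrime.prod_right fun i _ => (isRelPrime_X_of_eval_zero_ne_zero hp0 i).pow_right).mul_right
      hcoprime
  exact hrel.dvd_of_dvd_mul_left ⟨_, hid⟩

/-- If the scalar rational inner function `f = z^m p̌ / p` on `𝔻^d`, with `p` stable and coprime
with its reverse `p̌`, is the transfer function of a unitary colligation `[A B; C D]` with
`Zₙ = ⊕ᵣ zᵣ I_{nᵣ}`, then `p` divides the polynomial `det (I - A Zₙ)`. -/
theorem denominator_divides_det_of_realization (d : ℕ) (n : Fin d → ℕ)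
    (p pr : MvPolynomial (Fin d) ℂ) (m : Fin d → ℕ)
    (hstable : ∀ z : Fin d → ℂ, (∀ i, ‖z i‖ < 1) → eval z p ≠ 0)
    (hrev : ∀ z : Fin d → ℂ, (∀ i, z i ≠ 0) →
      eval z pr = (∏ i, z i ^ p.degreeOf i) *
        (starRingEnd ℂ) (eval (fun i => ((starRingEnd ℂ) (z i))⁻¹) p))
    (hcoprime : ∀ r : MvPolynomial (Fin d) ℂ, r ∣ p → r ∣ pr → IsUnit r)
    (A : Matrix (Σ r : Fin d, Fin (n r)) (Σ r : Fin d, Fin (n r)) ℂ)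
    (B : Matrix (Σ r : Fin d, Fin (n r)) (Fin 1) ℂ)
    (C : Matrix (Fin 1) (Σ r : Fin d, Fin (n r)) ℂ)
    (D : Matrix (Fin 1) (Fin 1) ℂ)
    (hU : Matrix.fromBlocks A B C D ∈ Matrix.unitaryGroup ((Σ r : Fin d, Fin (n r)) ⊕ Fin 1) ℂ)
    (htransfer : ∀ z : Fin d → ℂ, (∀ i, ‖z i‖ < 1) →
      eval z ((∏ i, X i ^ m i) * pr) =
        eval z p *
          ((D + C * Matrix.blockDiagonal' (fun r => z r • (1 : Matrix (Fin (n r)) (Fin (n r)) ℂ)) *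
              (1 - A * Matrix.blockDiagonal'
                (fun r => z r • (1 : Matrix (Fin (n r)) (Fin (n r)) ℂ)))⁻¹ * B) 0 0)) :
    p ∣ Matrix.det (1 - A.map MvPolynomial.C * Matrix.blockDiagonal'
      (fun r => (X r : MvPolynomial (Fin d) ℂ) • (1 : Matrix (Fin (n r)) (Fin (n r)) _))) :=
  denominator_divides_det_of_realization_general d n p pr m hstable hcoprime A B C D hU htransfer
end
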